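/- Lower semicontinuity of the extended dual functional: Let s ∈ L¹(X × Y) induce dS = s dH^{m+n}. Given continuous non-negative functions f on X, g on Y, and h̄ on X × Y, where X ⊂ ℝ^m and Y ⊂ ℝ^n are compact, the functional Ĩ(U,V) := ∬ h̄ d[S + U ⊗ H^n + H^m ⊗ V]₊ − ∫ f dU − ∫ g dV is lower semicontinuous along bounded sequences with respect to weak-* convergence in M(X) ⊕ M(Y): if (U_i,V_i) → (U,V) weakly-* with (U_i,V_i) bounded in total variation, then Ĩ(U,V) ≤ liminf_{i→∞} Ĩ(U_i,V_i). -/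

import Mathlib

open MeasureTheory Filter Topology Set
open scoped ENNReal
open Bornology
open scoped BoundedContinuousFunction

/-- Integral of a function against a finite signed measure, via the Jordan decomposition. -/
noncomputable def sInt {α : Type*} [MeasurableSpace α] (μ : SignedMeasure α) (φ : α → ℝ) : ℝ :=
  (∫ x, φ x ∂μ.toJordanDecomposition.posPart) - ∫ x, φ x ∂μ.toJordanDecomposition.negPart

/-- The product `U ⊗ ν` of a finite signed measure with a finite (positive) measure. -/
noncomputable def smProdRight {α β : Type*} [MeasurableSpace α] [MeasurableSpace β]
    (U : SignedMeasure α) (ν : Measure β) [IsFiniteMeasure ν] : SignedMeasure (α × β) :=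
  (U.toJordanDecomposition.posPart.prod ν).toSignedMeasure -
    (U.toJordanDecomposition.negPart.prod ν).toSignedMeasure

/-- The product `ν ⊗ V` of a finite (positive) measure with a finite signed measure. -/
noncomputable def smProdLeft {α β : Type*} [MeasurableSpace α] [MeasurableSpace β]
    (ν : Measure α) [IsFiniteMeasure ν] (V : SignedMeasure β) : SignedMeasure (α × β) :=
  (ν.prod V.toJordanDecomposition.posPart).toSignedMeasure -
    (ν.prod V.toJordanDecomposition.negPart).toSignedMeasure

/-- The extended dual functional
`Ĩ(U,V) := ∬ h̄ d[S + U ⊗ Hⁿ + Hᵐ ⊗ V]₊ - ∫ f dU - ∫ g dV`,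
where `dS = s dH^{m+n}` on `X × Y` and `Hᵐ`, `Hⁿ` denote Lebesgue measure on `X`, `Y`. -/
noncomputable def tildeI {m n : ℕ} (X : Set (Fin m → ℝ)) (Y : Set (Fin n → ℝ))
    [Fact ((volume : Measure (Fin m → ℝ)) X < ⊤)]
    [Fact ((volume : Measure (Fin n → ℝ)) Y < ⊤)]
    (s hbar : (Fin m → ℝ) × (Fin n → ℝ) → ℝ)
    (f : (Fin m → ℝ) → ℝ) (g : (Fin n → ℝ) → ℝ)
    (U : SignedMeasure (Fin m → ℝ)) (V : SignedMeasure (Fin n → ℝ)) : ℝ :=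
  (∫ p, hbar p ∂((MeasureTheory.SignedMeasure.toJordanDecomposition
      ((volume.restrict (X ×ˢ Y)).withDensityᵥ s +
        smProdRight U (volume.restrict Y) +
        smProdLeft (volume.restrict X) V)).posPart)) -
    sInt U f - sInt V g

section AuxLemmas

variable {α : Type*} [MeasurableSpace α]

lemma toSigned_sub_eq {p q p' q' : Measure α} [IsFiniteMeasure p] [IsFiniteMeasure q]
    [IsFiniteMeasure p'] [IsFiniteMeasure q']
    (h : p.toSignedMeasure - q.toSignedMeasure = p'.toSignedMeasure - q'.toSignedMeasure) :
    p + q' = p' + q := by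
  ext A hA
  have h2 := congrArg (fun ν : SignedMeasure α => ν A) h
  simp only [VectorMeasure.sub_apply] at h2
  rw [Measure.toSignedMeasure_apply_measurable hA, Measure.toSignedMeasure_apply_measurable hA,
    Measure.toSignedMeasure_apply_measurable hA, Measure.toSignedMeasure_apply_measurable hA] at h2
  rw [Measure.add_apply, Measure.add_apply,
    ← ENNReal.toReal_eq_toReal_iff' (by finiteness) (by finiteness),
    ENNReal.toReal_add (measure_ne_top _ _) (measure_ne_top _ _),
    ENNReal.toReal_add (measure_ne_top _ _) (measure_ne_top _ _)]
  simp only [measureReal_def] at h2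
  linarith

lemma jordan_eq_sub {ν : SignedMeasure α} {p q : Measure α}
    [IsFiniteMeasure p] [IsFiniteMeasure q]
    (h : ν = p.toSignedMeasure - q.toSignedMeasure) :
    ν.toJordanDecomposition.posPart.toSignedMeasure -
      ν.toJordanDecomposition.negPart.toSignedMeasure
      = p.toSignedMeasure - q.toSignedMeasure := by
  rw [← h]
  conv_rhs => rw [← ν.toSignedMeasure_toJordanDecomposition]
  rfl

lemma jordan_le_of_eq_sub {ν : SignedMeasure α} {p q : Measure α}
    [IsFiniteMeasure p] [IsFiniteMeasure q]
    (h : ν = p.toSignedMeasure - q.toSignedMeasure) :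
    ν.toJordanDecomposition.posPart ≤ p ∧ ν.toJordanDecomposition.negPart ≤ q := by
  have hme : ν.toJordanDecomposition.posPart + q = p + ν.toJordanDecomposition.negPart :=
    toSigned_sub_eq (jordan_eq_sub h)
  obtain ⟨u, hu, hpu, hnu⟩ := ν.toJordanDecomposition.mutuallySingular
  constructor
  · refine Measure.le_iff.2 fun A hA => ?_
    have e1 : ν.toJordanDecomposition.posPart A = ν.toJordanDecomposition.posPart (A \ u) := by
      have := measure_inter_add_diff (μ := ν.toJordanDecomposition.posPart) A hu
      have h0 : ν.toJordanDecomposition.posPart (A ∩ u) = 0 :=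
        measure_mono_null inter_subset_right hpu
      rw [← this, h0, zero_add]
    have e2 : ν.toJordanDecomposition.negPart (A \ u) = 0 :=
      measure_mono_null (diff_subset_compl A u) hnu
    have e3 : ν.toJordanDecomposition.posPart (A \ u) + q (A \ u)
        = p (A \ u) + ν.toJordanDecomposition.negPart (A \ u) := by
      have := congrArg (fun μ : Measure α => μ (A \ u)) hme
      simpa [Measure.add_apply] using this
    rw [e1]
    calc ν.toJordanDecomposition.posPart (A \ u)
        ≤ ν.toJordanDecomposition.posPart (A \ u) + q (A \ u) := le_self_add
      _ = p (A \ u) := by rw [e3, e2, add_zero]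
      _ ≤ p A := measure_mono diff_subset
  · refine Measure.le_iff.2 fun A hA => ?_
    have e1 : ν.toJordanDecomposition.negPart A = ν.toJordanDecomposition.negPart (A ∩ u) := by
      have := measure_inter_add_diff (μ := ν.toJordanDecomposition.negPart) A hu
      have h0 : ν.toJordanDecomposition.negPart (A \ u) = 0 :=
        measure_mono_null (diff_subset_compl A u) hnu
      rw [← this, h0, add_zero]
    have e2 : ν.toJordanDecomposition.posPart (A ∩ u) = 0 :=
      measure_mono_null inter_subset_right hpu
    have e3 : ν.toJordanDecomposition.posPart (A ∩ u) + q (A ∩ u)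
        = p (A ∩ u) + ν.toJordanDecomposition.negPart (A ∩ u) := by
      have := congrArg (fun μ : Measure α => μ (A ∩ u)) hme
      simpa [Measure.add_apply] using this
    rw [e1]
    calc ν.toJordanDecomposition.negPart (A ∩ u)
        ≤ p (A ∩ u) + ν.toJordanDecomposition.negPart (A ∩ u) := le_add_self
      _ = ν.toJordanDecomposition.posPart (A ∩ u) + q (A ∩ u) := e3.symm
      _ = q (A ∩ u) := by rw [e2, zero_add]
      _ ≤ q A := measure_mono inter_subset_left

lemma integrable_of_bdd {μ : Measure α} [IsFiniteMeasure μ] {h : α → ℝ} {M : ℝ}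
    (hm : Measurable h) (hb : ∀ x, |h x| ≤ M) : Integrable h μ :=
  (integrable_const M).mono' hm.aestronglyMeasurable
    (Filter.Eventually.of_forall fun x => by simpa [Real.norm_eq_abs] using hb x)

lemma sInt_eq {ν : SignedMeasure α} {p q : Measure α} [IsFiniteMeasure p] [IsFiniteMeasure q]
    (h : ν = p.toSignedMeasure - q.toSignedMeasure) {φ : α → ℝ}
    (hp : Integrable φ p) (hq : Integrable φ q) :
    sInt ν φ = (∫ x, φ x ∂p) - ∫ x, φ x ∂q := by
  obtain ⟨hPle, hNle⟩ := jordan_le_of_eq_sub h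
  have hme : ν.toJordanDecomposition.posPart + q = p + ν.toJordanDecomposition.negPart :=
    toSigned_sub_eq (jordan_eq_sub h)
  have hip : Integrable φ ν.toJordanDecomposition.posPart := hp.mono_measure hPle
  have hin : Integrable φ ν.toJordanDecomposition.negPart := hq.mono_measure hNle
  have := congrArg (fun m : Measure α => ∫ x, φ x ∂m) hme
  rw [integral_add_measure hip hq, integral_add_measure hp hin] at this
  rw [sInt]
  linarith

lemma tv_split (W : SignedMeasure α) (E : Set α) (hE : W.totalVariation E = 0) :
    W.toJordanDecomposition.posPart E = 0 ∧ W.toJordanDecomposition.negPart E = 0 := by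
  rwa [SignedMeasure.totalVariation, Measure.add_apply, add_eq_zero] at hE

lemma integral_congr_null {ρ : Measure α} {E : Set α} (hρ : ρ Eᶜ = 0)
    {f F : α → ℝ} (heq : ∀ x ∈ E, f x = F x) : ∫ x, f x ∂ρ = ∫ x, F x ∂ρ := by
  refine integral_congr_ae (ae_iff.2 (measure_mono_null ?_ hρ))
  intro x hx
  exact fun hxE => hx (heq x hxE)

lemma sInt_congr {W : SignedMeasure α} {E : Set α}
    (h1 : W.toJordanDecomposition.posPart Eᶜ = 0)
    (h2 : W.toJordanDecomposition.negPart Eᶜ = 0)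
    {f F : α → ℝ} (heq : ∀ x ∈ E, f x = F x) : sInt W f = sInt W F := by
  rw [sInt, sInt, integral_congr_null h1 heq, integral_congr_null h2 heq]

end AuxLemmas

section ProdAux

variable {α β : Type*} [MeasurableSpace α] [MeasurableSpace β]
  (S0 : SignedMeasure (α × β)) (μX : Measure α) (μY : Measure β)
  [IsFiniteMeasure μX] [IsFiniteMeasure μY]
  (U : SignedMeasure α) (V : SignedMeasure β)

/-- The natural candidate for the positive part of `S₀ + U ⊗ μY + μX ⊗ V`. -/
noncomputable def prodP : Measure (α × β) :=
  S0.toJordanDecomposition.posPart + U.toJordanDecomposition.posPart.prod μY +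
    μX.prod V.toJordanDecomposition.posPart

/-- The natural candidate for the negative part of `S₀ + U ⊗ μY + μX ⊗ V`. -/
noncomputable def prodN : Measure (α × β) :=
  S0.toJordanDecomposition.negPart + U.toJordanDecomposition.negPart.prod μY +
    μX.prod V.toJordanDecomposition.negPart

instance : IsFiniteMeasure (prodP S0 μX μY U V) := by unfold prodP; infer_instance
instance : IsFiniteMeasure (prodN S0 μX μY U V) := by unfold prodN; infer_instance

lemma T_eq : S0 + smProdRight U μY + smProdLeft μX V =
    (prodP S0 μX μY U V).toSignedMeasure - (prodN S0 μX μY U V).toSignedMeasure := by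
  unfold prodP prodN
  rw [Measure.toSignedMeasure_add, Measure.toSignedMeasure_add,
    Measure.toSignedMeasure_add, Measure.toSignedMeasure_add]
  have hS : S0 = S0.toJordanDecomposition.posPart.toSignedMeasure -
      S0.toJordanDecomposition.negPart.toSignedMeasure := by
    conv_lhs => rw [← S0.toSignedMeasure_toJordanDecomposition]
    rfl
  rw [smProdRight, smProdLeft]
  nth_rewrite 1 [hS]
  abel

lemma sInt_T {φ : α × β → ℝ} {M : ℝ} (hm : Measurable φ) (hb : ∀ p, |φ p| ≤ M) :
    sInt (S0 + smProdRight U μY + smProdLeft μX V) φ =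
      sInt S0 φ + sInt U (fun x => ∫ y, φ (x, y) ∂μY) +
        sInt V (fun y => ∫ x, φ (x, y) ∂μX) := by
  have hintP : Integrable φ (prodP S0 μX μY U V) := integrable_of_bdd hm hb
  have hintN : Integrable φ (prodN S0 μX μY U V) := integrable_of_bdd hm hb
  rw [sInt_eq (T_eq S0 μX μY U V) hintP hintN]
  have h1 : ∀ (ρ : Measure (α × β)) (ρ' : Measure (α × β)) (ρ'' : Measure (α × β))
      [IsFiniteMeasure ρ] [IsFiniteMeasure ρ'] [IsFiniteMeasure ρ''],
      ∫ p, φ p ∂(ρ + ρ' + ρ'') = (∫ p, φ p ∂ρ) + (∫ p, φ p ∂ρ') + ∫ p, φ p ∂ρ'' := by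
    intro ρ ρ' ρ'' _ _ _
    rw [integral_add_measure ((integrable_of_bdd hm hb).add_measure (integrable_of_bdd hm hb))
        (integrable_of_bdd hm hb),
      integral_add_measure (integrable_of_bdd hm hb) (integrable_of_bdd hm hb)]
  unfold prodP prodN
  rw [h1, h1]
  have e1 : ∫ p, φ p ∂(U.toJordanDecomposition.posPart.prod μY)
      = ∫ x, (∫ y, φ (x, y) ∂μY) ∂U.toJordanDecomposition.posPart :=
    integral_prod φ (integrable_of_bdd hm hb)
  have e2 : ∫ p, φ p ∂(U.toJordanDecomposition.negPart.prod μY)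
      = ∫ x, (∫ y, φ (x, y) ∂μY) ∂U.toJordanDecomposition.negPart :=
    integral_prod φ (integrable_of_bdd hm hb)
  have e3 : ∫ p, φ p ∂(μX.prod V.toJordanDecomposition.posPart)
      = ∫ y, (∫ x, φ (x, y) ∂μX) ∂V.toJordanDecomposition.posPart :=
    integral_prod_symm φ (integrable_of_bdd hm hb)
  have e4 : ∫ p, φ p ∂(μX.prod V.toJordanDecomposition.negPart)
      = ∫ y, (∫ x, φ (x, y) ∂μX) ∂V.toJordanDecomposition.negPart :=
    integral_prod_symm φ (integrable_of_bdd hm hb)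
  rw [e1, e2, e3, e4]
  simp only [sInt]
  ring

lemma prodP_compl_null {X : Set α} {Y : Set β}
    (hS0 : S0.toJordanDecomposition.posPart ((X ×ˢ Y)ᶜ) = 0)
    (hμX : μX Xᶜ = 0) (hμY : μY Yᶜ = 0)
    (hU : U.toJordanDecomposition.posPart Xᶜ = 0)
    (hV : V.toJordanDecomposition.posPart Yᶜ = 0) :
    prodP S0 μX μY U V ((X ×ˢ Y)ᶜ) = 0 := by
  have hsub : (X ×ˢ Y)ᶜ ⊆ (Xᶜ ×ˢ univ) ∪ (univ ×ˢ Yᶜ) := by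
    intro z hz
    rcases not_and_or.1 (fun hmem => hz (mem_prod.2 ⟨hmem.1, hmem.2⟩)) with h1 | h2
    · exact Or.inl ⟨h1, mem_univ _⟩
    · exact Or.inr ⟨mem_univ _, h2⟩
  have key : ∀ (p : Measure α) (ν : Measure β), p Xᶜ = 0 → ν Yᶜ = 0 → [SFinite p] → [SFinite ν] →
      (p.prod ν) ((X ×ˢ Y)ᶜ) = 0 := by
    intro p ν hp hν _ _
    refine measure_mono_null hsub (measure_union_null ?_ ?_)
    · rw [Measure.prod_prod, hp, zero_mul]
    · rw [Measure.prod_prod, hν, mul_zero]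
  unfold prodP
  simp only [Measure.add_apply]
  rw [hS0, key _ _ hU hμY, key _ _ hμX hV]
  simp

lemma prodN_compl_null {X : Set α} {Y : Set β}
    (hS0 : S0.toJordanDecomposition.negPart ((X ×ˢ Y)ᶜ) = 0)
    (hμX : μX Xᶜ = 0) (hμY : μY Yᶜ = 0)
    (hU : U.toJordanDecomposition.negPart Xᶜ = 0)
    (hV : V.toJordanDecomposition.negPart Yᶜ = 0) :
    prodN S0 μX μY U V ((X ×ˢ Y)ᶜ) = 0 := by
  have hsub : (X ×ˢ Y)ᶜ ⊆ (Xᶜ ×ˢ univ) ∪ (univ ×ˢ Yᶜ) := by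
    intro z hz
    rcases not_and_or.1 (fun hmem => hz (mem_prod.2 ⟨hmem.1, hmem.2⟩)) with h1 | h2
    · exact Or.inl ⟨h1, mem_univ _⟩
    · exact Or.inr ⟨mem_univ _, h2⟩
  have key : ∀ (p : Measure α) (ν : Measure β), p Xᶜ = 0 → ν Yᶜ = 0 → [SFinite p] → [SFinite ν] →
      (p.prod ν) ((X ×ˢ Y)ᶜ) = 0 := by
    intro p ν hp hν _ _
    refine measure_mono_null hsub (measure_union_null ?_ ?_)
    · rw [Measure.prod_prod, hp, zero_mul]
    · rw [Measure.prod_prod, hν, mul_zero]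
  unfold prodN
  simp only [Measure.add_apply]
  rw [hS0, key _ _ hU hμY, key _ _ hμX hV]
  simp

end ProdAux

section TopAux

lemma exists_ext {γ : Type*} [TopologicalSpace γ] [NormalSpace γ] {K : Set γ} (hK : IsClosed K)
    {h : γ → ℝ} (hc : ContinuousOn h K) :
    ∃ H : γ → ℝ, Continuous H ∧ ∀ x ∈ K, H x = h x := by
  obtain ⟨g, hg⟩ := ContinuousMap.exists_restrict_eq (Y := ℝ) hK ⟨K.restrict h, hc.restrict⟩
  refine ⟨g, g.continuous, fun x hx => ?_⟩
  have := DFunLike.congr_fun hg (⟨x, hx⟩ : K)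
  exact this

lemma exists_test {γ : Type*} [MeasurableSpace γ] [TopologicalSpace γ] [BorelSpace γ]
    [TopologicalSpace.PseudoMetrizableSpace γ] [T2Space γ] [RegularSpace γ]
    [LocallyCompactSpace γ]
    (W : SignedMeasure γ) {K : Set γ} (hK : IsCompact K)
    (hpos : W.toJordanDecomposition.posPart Kᶜ = 0)
    (hneg : W.toJordanDecomposition.negPart Kᶜ = 0)
    {H : γ → ℝ} {M : ℝ} (hHc : Continuous H) (hH0 : ∀ x, 0 ≤ H x) (hHM : ∀ x, H x ≤ M)
    {ε : ℝ} (hε : 0 < ε) :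
    ∃ φ : γ → ℝ, Continuous φ ∧ (∀ x, 0 ≤ φ x) ∧ (∀ x, φ x ≤ H x) ∧
      (∫ x, H x ∂W.toJordanDecomposition.posPart) ≤ sInt W φ + ε := by
  set pos := W.toJordanDecomposition.posPart with hposdef
  set neg := W.toJordanDecomposition.negPart with hnegdef
  set M' : ℝ := max M 1 with hM'def
  have hM'pos : 0 < M' := lt_of_lt_of_le one_pos (le_max_right _ _)
  have hHM' : ∀ x, H x ≤ M' := fun x => (hHM x).trans (le_max_left _ _)
  set δ : ℝ := ε / (2 * M') with hδdef
  have hδ : 0 < δ := div_pos hε (by positivity)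
  obtain ⟨u, hu, hpu, hnu⟩ := W.toJordanDecomposition.mutuallySingular
  set A := uᶜ ∩ K with hAdef
  have hAm : MeasurableSet A := hu.compl.inter hK.isClosed.measurableSet
  have hposAc : pos Aᶜ = 0 := by
    have hAc : Aᶜ = u ∪ Kᶜ := by rw [hAdef, compl_inter, compl_compl]
    rw [hAc]
    exact measure_union_null hpu hpos
  obtain ⟨C, hCA, hCclosed, hCd⟩ := hAm.exists_isClosed_diff_lt (measure_ne_top pos A)
    (ENNReal.ofReal_pos.2 hδ).ne'
  have hCcomp : IsCompact C := hK.of_isClosed_subset hCclosed (hCA.trans inter_subset_right)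
  have hnegC : neg C = 0 :=
    measure_mono_null (hCA.trans inter_subset_left) hnu
  obtain ⟨O, hCO, hOopen, hnegO⟩ := Set.exists_isOpen_lt_of_lt C (ENNReal.ofReal δ)
    (by rw [hnegC]; exact ENNReal.ofReal_pos.2 hδ)
  have hdisj : Disjoint C Oᶜ := Set.disjoint_left.2 fun x hxC hxOc => hxOc (hCO hxC)
  obtain ⟨v, hv0, hv1, hvmem⟩ :=
    exists_continuous_zero_one_of_isCompact hCcomp hOopen.isClosed_compl hdisj
  set φ : γ → ℝ := fun x => (1 - v x) * H x with hφdef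
  have hφc : Continuous φ := (continuous_const.sub v.continuous).mul hHc
  have hφ0 : ∀ x, 0 ≤ φ x := fun x =>
    mul_nonneg (by have := (hvmem x).2; linarith) (hH0 x)
  have hφH : ∀ x, φ x ≤ H x := fun x => by
    have h1 : 1 - v x ≤ 1 := by have := (hvmem x).1; linarith
    calc (1 - v x) * H x ≤ 1 * H x := mul_le_mul_of_nonneg_right h1 (hH0 x)
      _ = H x := one_mul _
  refine ⟨φ, hφc, hφ0, hφH, ?_⟩
  have hHint : ∀ (ρ : Measure γ) [IsFiniteMeasure ρ], Integrable H ρ := fun ρ _ =>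
    integrable_of_bdd hHc.measurable (fun x => by rw [abs_of_nonneg (hH0 x)]; exact hHM' x)
  have hφint : ∀ (ρ : Measure γ) [IsFiniteMeasure ρ], Integrable φ ρ := fun ρ _ =>
    integrable_of_bdd hφc.measurable
      (fun x => by rw [abs_of_nonneg (hφ0 x)]; exact (hφH x).trans (hHM' x))
  have hCm : MeasurableSet C := hCclosed.measurableSet
  have hOm : MeasurableSet O := hOopen.measurableSet
  have step1 : (∫ x, H x ∂pos) - (∫ x, φ x ∂pos) ≤ M' * δ := by
    rw [← integral_sub (hHint pos) (hφint pos)]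
    have hle : ∀ x, H x - φ x ≤ Cᶜ.indicator (fun _ => M') x := by
      intro x
      by_cases hx : x ∈ C
      · have hv : v x = 0 := hv0 hx
        have he : H x - φ x = 0 := by simp [hφdef, hv]
        rw [he, indicator_of_notMem (by simp [hx] : x ∉ Cᶜ)]
      · have he : H x - φ x = v x * H x := by rw [hφdef]; ring
        rw [he, indicator_of_mem (by simpa using hx)]
        calc v x * H x ≤ 1 * M' := by
              apply mul_le_mul (hvmem x).2 (hHM' x) (hH0 x) zero_le_one
          _ = M' := one_mul _
    have hind : Integrable (Cᶜ.indicator (fun _ => M')) pos :=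
      (integrable_const M').indicator hCm.compl
    calc ∫ x, (H x - φ x) ∂pos ≤ ∫ x, Cᶜ.indicator (fun _ => M') x ∂pos :=
          integral_mono ((hHint pos).sub (hφint pos)) hind hle
      _ = (pos Cᶜ).toReal * M' := by
          rw [integral_indicator_const _ hCm.compl]; simp [smul_eq_mul, measureReal_def]
      _ ≤ δ * M' := by
          have hsub : Cᶜ ⊆ Aᶜ ∪ (A \ C) := by
            intro x hx
            by_cases hxA : x ∈ A
            · exact Or.inr ⟨hxA, hx⟩
            · exact Or.inl hxA
          have hmeas : pos Cᶜ ≤ ENNReal.ofReal δ := by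
            calc pos Cᶜ ≤ pos (Aᶜ ∪ (A \ C)) := measure_mono hsub
              _ ≤ pos Aᶜ + pos (A \ C) := measure_union_le _ _
              _ = pos (A \ C) := by rw [hposAc, zero_add]
              _ ≤ ENNReal.ofReal δ := hCd.le
          have : (pos Cᶜ).toReal ≤ δ :=
            ENNReal.toReal_le_of_le_ofReal hδ.le hmeas
          exact mul_le_mul_of_nonneg_right this hM'pos.le
      _ = M' * δ := mul_comm _ _
  have step2 : (∫ x, φ x ∂neg) ≤ M' * δ := by
    have hle : ∀ x, φ x ≤ O.indicator (fun _ => M') x := by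
      intro x
      by_cases hx : x ∈ O
      · rw [indicator_of_mem hx]
        exact (hφH x).trans (hHM' x)
      · have hv : v x = 1 := hv1 hx
        simp [hφdef, hv, indicator_of_notMem hx]
    have hind : Integrable (O.indicator (fun _ => M')) neg :=
      (integrable_const M').indicator hOm
    calc ∫ x, φ x ∂neg ≤ ∫ x, O.indicator (fun _ => M') x ∂neg :=
          integral_mono (hφint neg) hind hle
      _ = (neg O).toReal * M' := by
          rw [integral_indicator_const _ hOm]; simp [smul_eq_mul, measureReal_def]
      _ ≤ δ * M' := by
          have : (neg O).toReal ≤ δ := ENNReal.toReal_le_of_le_ofReal hδ.le hnegO.le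
          exact mul_le_mul_of_nonneg_right this hM'pos.le
      _ = M' * δ := mul_comm _ _
  have hsInt : sInt W φ = (∫ x, φ x ∂pos) - ∫ x, φ x ∂neg := rfl
  rw [hsInt]
  have hδval : M' * δ + M' * δ = ε := by
    rw [hδdef]; field_simp; ring
  linarith

variable {γ : Type*} [MeasurableSpace γ] [TopologicalSpace γ] [BorelSpace γ]
    [TopologicalSpace.PseudoMetrizableSpace γ] [T2Space γ] [RegularSpace γ]
    [LocallyCompactSpace γ]

lemma tv_lower (W : SignedMeasure γ) {K : Set γ} (hK : IsCompact K)
    (hTV : W.totalVariation Kᶜ = 0) {ε : ℝ} (hε : 0 < ε) :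
    ∃ ψ : γ → ℝ, Continuous ψ ∧ (∀ x, |ψ x| ≤ 1) ∧
      (W.totalVariation univ).toReal ≤ sInt W ψ + ε := by
  obtain ⟨hpos, hneg⟩ := tv_split W Kᶜ hTV
  set pos := W.toJordanDecomposition.posPart with hposdef
  set neg := W.toJordanDecomposition.negPart with hnegdef
  set δ : ℝ := ε / 4 with hδdef
  have hδ : 0 < δ := by positivity
  obtain ⟨u, hu, hpu, hnu⟩ := W.toJordanDecomposition.mutuallySingular
  set A₁ := uᶜ ∩ K with hA₁def
  set A₂ := u ∩ K with hA₂def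
  have hA₁m : MeasurableSet A₁ := hu.compl.inter hK.isClosed.measurableSet
  have hA₂m : MeasurableSet A₂ := hu.inter hK.isClosed.measurableSet
  have hposA₁c : pos A₁ᶜ = 0 := by
    have : A₁ᶜ = u ∪ Kᶜ := by rw [hA₁def, compl_inter, compl_compl]
    rw [this]; exact measure_union_null hpu hpos
  have hnegA₂c : neg A₂ᶜ = 0 := by
    have : A₂ᶜ = uᶜ ∪ Kᶜ := by rw [hA₂def, compl_inter]
    rw [this]; exact measure_union_null hnu hneg
  obtain ⟨C₁, hC₁A, hC₁closed, hC₁d⟩ := hA₁m.exists_isClosed_diff_lt (measure_ne_top pos A₁)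
    (ENNReal.ofReal_pos.2 hδ).ne'
  obtain ⟨C₂, hC₂A, hC₂closed, hC₂d⟩ := hA₂m.exists_isClosed_diff_lt (measure_ne_top neg A₂)
    (ENNReal.ofReal_pos.2 hδ).ne'
  have hC₁comp : IsCompact C₁ := hK.of_isClosed_subset hC₁closed (hC₁A.trans inter_subset_right)
  have hposC₁c : pos C₁ᶜ ≤ ENNReal.ofReal δ := by
    have hsub : C₁ᶜ ⊆ A₁ᶜ ∪ (A₁ \ C₁) := by
      intro x hx
      by_cases hxA : x ∈ A₁
      · exact Or.inr ⟨hxA, hx⟩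
      · exact Or.inl hxA
    calc pos C₁ᶜ ≤ pos A₁ᶜ + pos (A₁ \ C₁) := le_trans (measure_mono hsub) (measure_union_le _ _)
      _ = pos (A₁ \ C₁) := by rw [hposA₁c, zero_add]
      _ ≤ ENNReal.ofReal δ := hC₁d.le
  have hnegC₂c : neg C₂ᶜ ≤ ENNReal.ofReal δ := by
    have hsub : C₂ᶜ ⊆ A₂ᶜ ∪ (A₂ \ C₂) := by
      intro x hx
      by_cases hxA : x ∈ A₂
      · exact Or.inr ⟨hxA, hx⟩
      · exact Or.inl hxA
    calc neg C₂ᶜ ≤ neg A₂ᶜ + neg (A₂ \ C₂) := le_trans (measure_mono hsub) (measure_union_le _ _)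
      _ = neg (A₂ \ C₂) := by rw [hnegA₂c, zero_add]
      _ ≤ ENNReal.ofReal δ := hC₂d.le
  have hdisj : Disjoint C₁ C₂ := by
    refine Set.disjoint_left.2 fun x hx1 hx2 => ?_
    exact ((hC₁A hx1).1 : x ∈ uᶜ) ((hC₂A hx2).1 : x ∈ u)
  obtain ⟨v, hv0, hv1, hvmem⟩ :=
    exists_continuous_zero_one_of_isCompact hC₁comp hC₂closed hdisj
  set ψ : γ → ℝ := fun x => 1 - 2 * v x with hψdef
  have hψc : Continuous ψ := continuous_const.sub (continuous_const.mul v.continuous)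
  have hψbd : ∀ x, |ψ x| ≤ 1 := fun x => by
    have h1 := (hvmem x).1; have h2 := (hvmem x).2
    have he : ψ x = 1 - 2 * v x := rfl
    rw [he, abs_le]
    constructor <;> linarith
  refine ⟨ψ, hψc, hψbd, ?_⟩
  have hψint : ∀ (ρ : Measure γ) [IsFiniteMeasure ρ], Integrable ψ ρ := fun ρ _ =>
    integrable_of_bdd hψc.measurable hψbd
  have hC₁m : MeasurableSet C₁ := hC₁closed.measurableSet
  have hC₂m : MeasurableSet C₂ := hC₂closed.measurableSet
  -- lower bound for ∫ ψ dpos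
  have hlow1 : (pos univ).toReal - 2 * δ ≤ ∫ x, ψ x ∂pos := by
    have hle : ∀ x, (1 : ℝ) - 2 * C₁ᶜ.indicator (fun _ => (1 : ℝ)) x ≤ ψ x := by
      intro x
      by_cases hx : x ∈ C₁
      · have : v x = 0 := hv0 hx
        simp only [hψdef, this, indicator_of_notMem (by simp [hx] : x ∉ C₁ᶜ)]
        norm_num
      · rw [indicator_of_mem (by simpa using hx)]
        have := (hvmem x).2
        simp only [hψdef]; linarith
    have hind : Integrable (fun x => (1 : ℝ) - 2 * C₁ᶜ.indicator (fun _ => (1 : ℝ)) x) pos :=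
      (integrable_const 1).sub (((integrable_const (1 : ℝ)).indicator hC₁m.compl).const_mul 2)
    calc (pos univ).toReal - 2 * δ
        ≤ (pos univ).toReal - 2 * (pos C₁ᶜ).toReal := by
          have : (pos C₁ᶜ).toReal ≤ δ := ENNReal.toReal_le_of_le_ofReal hδ.le hposC₁c
          linarith
      _ = ∫ x, ((1 : ℝ) - 2 * C₁ᶜ.indicator (fun _ => (1 : ℝ)) x) ∂pos := by
          rw [integral_sub (integrable_const 1)
            (((integrable_const (1 : ℝ)).indicator hC₁m.compl).const_mul 2),
            integral_const, integral_const_mul, integral_indicator_const _ hC₁m.compl]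
          simp [smul_eq_mul, measureReal_def]
      _ ≤ ∫ x, ψ x ∂pos := integral_mono hind (hψint pos) hle
  -- upper bound for ∫ ψ dneg
  have hlow2 : ∫ x, ψ x ∂neg ≤ -(neg univ).toReal + 2 * δ := by
    have hle : ∀ x, ψ x ≤ (-1 : ℝ) + 2 * C₂ᶜ.indicator (fun _ => (1 : ℝ)) x := by
      intro x
      by_cases hx : x ∈ C₂
      · have : v x = 1 := hv1 hx
        simp only [hψdef, this, indicator_of_notMem (by simp [hx] : x ∉ C₂ᶜ)]
        norm_num
      · rw [indicator_of_mem (by simpa using hx)]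
        have := (hvmem x).1
        simp only [hψdef]; linarith
    have hind : Integrable (fun x => (-1 : ℝ) + 2 * C₂ᶜ.indicator (fun _ => (1 : ℝ)) x) neg :=
      (integrable_const (-1)).add (((integrable_const (1 : ℝ)).indicator hC₂m.compl).const_mul 2)
    calc ∫ x, ψ x ∂neg ≤ ∫ x, ((-1 : ℝ) + 2 * C₂ᶜ.indicator (fun _ => (1 : ℝ)) x) ∂neg :=
          integral_mono (hψint neg) hind hle
      _ = -(neg univ).toReal + 2 * (neg C₂ᶜ).toReal := by
          rw [integral_add (integrable_const (-1))
            (((integrable_const (1 : ℝ)).indicator hC₂m.compl).const_mul 2),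
            integral_const, integral_const_mul, integral_indicator_const _ hC₂m.compl]
          simp [smul_eq_mul, measureReal_def]
      _ ≤ -(neg univ).toReal + 2 * δ := by
          have : (neg C₂ᶜ).toReal ≤ δ := ENNReal.toReal_le_of_le_ofReal hδ.le hnegC₂c
          linarith
  have hTVuniv : (W.totalVariation univ).toReal = (pos univ).toReal + (neg univ).toReal := by
    rw [SignedMeasure.totalVariation, Measure.add_apply,
      ENNReal.toReal_add (measure_ne_top _ _) (measure_ne_top _ _)]
  have hsInt : sInt W ψ = (∫ x, ψ x ∂pos) - ∫ x, ψ x ∂neg := rfl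
  rw [hTVuniv, hsInt, hδdef] at *
  linarith

lemma tv_bound (W : ℕ → SignedMeasure γ) {K : Set γ} (hK : IsCompact K)
    (hsupp : ∀ i, (W i).totalVariation Kᶜ = 0)
    (hconv : ∀ ψ : γ → ℝ, Continuous ψ → ∃ C, ∀ i, |sInt (W i) ψ| ≤ C) :
    ∃ R : ℝ, ∀ i, (((W i).totalVariation) univ).toReal ≤ R := by
  -- the family of continuous linear functionals on bounded continuous functions
  have hbint : ∀ (ρ : Measure γ) [IsFiniteMeasure ρ] (ψ : γ →ᵇ ℝ), Integrable (⇑ψ) ρ :=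
    fun ρ _ ψ => ψ.integrable ρ
  set Λ : ℕ → (γ →ᵇ ℝ) →L[ℝ] ℝ := fun i =>
    LinearMap.mkContinuous
      { toFun := fun ψ => sInt (W i) (⇑ψ)
        map_add' := fun ψ χ => by
          simp only [sInt, BoundedContinuousFunction.coe_add, Pi.add_apply]
          rw [integral_add (hbint _ ψ) (hbint _ χ), integral_add (hbint _ ψ) (hbint _ χ)]
          ring
        map_smul' := fun c ψ => by
          simp only [sInt, BoundedContinuousFunction.coe_smul, smul_eq_mul, RingHom.id_apply]
          rw [integral_const_mul c, integral_const_mul c]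
          ring }
      ((((W i).totalVariation) univ).toReal)
      (fun ψ => by
        have h1 : ‖∫ x, ψ x ∂(W i).toJordanDecomposition.posPart‖ ≤
            (((W i).toJordanDecomposition.posPart) univ).toReal * ‖ψ‖ := by
          rw [mul_comm]
          exact norm_integral_le_of_norm_le_const
            (Filter.Eventually.of_forall fun x => ψ.norm_coe_le_norm x)
        have h2 : ‖∫ x, ψ x ∂(W i).toJordanDecomposition.negPart‖ ≤
            (((W i).toJordanDecomposition.negPart) univ).toReal * ‖ψ‖ := by
          rw [mul_comm]
          exact norm_integral_le_of_norm_le_const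
            (Filter.Eventually.of_forall fun x => ψ.norm_coe_le_norm x)
        have htv : (((W i).totalVariation) univ).toReal =
            (((W i).toJordanDecomposition.posPart) univ).toReal +
              (((W i).toJordanDecomposition.negPart) univ).toReal := by
          rw [SignedMeasure.totalVariation, Measure.add_apply,
            ENNReal.toReal_add (measure_ne_top _ _) (measure_ne_top _ _)]
        have := norm_sub_le (∫ x, ψ x ∂(W i).toJordanDecomposition.posPart)
          (∫ x, ψ x ∂(W i).toJordanDecomposition.negPart)
        simp only [sInt, LinearMap.coe_mk, AddHom.coe_mk]
        rw [Real.norm_eq_abs] at *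
        rw [htv]
        calc |(∫ x, ψ x ∂(W i).toJordanDecomposition.posPart) -
              ∫ x, ψ x ∂(W i).toJordanDecomposition.negPart| ≤ _ := this
          _ ≤ _ := add_le_add h1 h2
          _ = _ := by ring) with hΛdef
  -- Banach–Steinhaus
  have hpt : ∀ ψ : γ →ᵇ ℝ, ∃ C, ∀ i, ‖Λ i ψ‖ ≤ C := by
    intro ψ
    obtain ⟨C, hC⟩ := hconv ψ ψ.continuous
    exact ⟨C, fun i => by simpa [Real.norm_eq_abs, hΛdef] using hC i⟩
  obtain ⟨C', hC'⟩ := banach_steinhaus hpt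
  refine ⟨C' + 1, fun i => ?_⟩
  obtain ⟨ψ, hψc, hψbd, hψkey⟩ := tv_lower (W i) hK (hsupp i) one_pos
  set ψb : γ →ᵇ ℝ := BoundedContinuousFunction.ofNormedAddCommGroup ψ hψc 1
    (fun x => by simpa [Real.norm_eq_abs] using hψbd x) with hψbdef
  have hnorm : ‖ψb‖ ≤ 1 :=
    BoundedContinuousFunction.norm_ofNormedAddCommGroup_le hψc zero_le_one
      (fun x => by simpa [Real.norm_eq_abs] using hψbd x)
  have happ : Λ i ψb = sInt (W i) ψ := by
    simp [hΛdef, hψbdef]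
  have hΛle : |sInt (W i) ψ| ≤ C' := by
    rw [← happ]
    calc ‖Λ i ψb‖ ≤ ‖Λ i‖ * ‖ψb‖ := (Λ i).le_opNorm ψb
      _ ≤ C' * 1 := by
          apply mul_le_mul (hC' i) hnorm (norm_nonneg _) ((norm_nonneg _).trans (hC' i))
      _ = C' := mul_one _
  have := le_abs_self (sInt (W i) ψ)
  have := abs_le.1 hΛle
  linarith [hψkey]


end TopAux

/-- **Lower semicontinuity of the extended dual functional** along bounded weak-*
convergent sequences in `M(X) ⊕ M(Y)`. -/
theorem tildeI_lower_semicontinuous {m n : ℕ}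
    (X : Set (Fin m → ℝ)) (Y : Set (Fin n → ℝ))
    (hX : IsCompact X) (hY : IsCompact Y)
    [Fact ((volume : Measure (Fin m → ℝ)) X < ⊤)]
    [Fact ((volume : Measure (Fin n → ℝ)) Y < ⊤)]
    (s hbar : (Fin m → ℝ) × (Fin n → ℝ) → ℝ)
    (f : (Fin m → ℝ) → ℝ) (g : (Fin n → ℝ) → ℝ)
    (hs : IntegrableOn s (X ×ˢ Y))
    (hf_cont : ContinuousOn f X) (hf_nonneg : ∀ x ∈ X, 0 ≤ f x) (hf_meas : Measurable f)
    (hg_cont : ContinuousOn g Y) (hg_nonneg : ∀ y ∈ Y, 0 ≤ g y) (hg_meas : Measurable g)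
    (hbar_cont : ContinuousOn hbar (X ×ˢ Y))
    (hbar_nonneg : ∀ p ∈ X ×ˢ Y, 0 ≤ hbar p) (hbar_meas : Measurable hbar)
    (U : ℕ → SignedMeasure (Fin m → ℝ)) (V : ℕ → SignedMeasure (Fin n → ℝ))
    (Ulim : SignedMeasure (Fin m → ℝ)) (Vlim : SignedMeasure (Fin n → ℝ))
    (hUsupp : ∀ i, (U i).totalVariation Xᶜ = 0)
    (hVsupp : ∀ i, (V i).totalVariation Yᶜ = 0)
    (hUlimsupp : Ulim.totalVariation Xᶜ = 0) (hVlimsupp : Vlim.totalVariation Yᶜ = 0)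
    (hbdd : ∃ C : ℝ≥0∞, ∀ i,
      (U i).totalVariation univ ≤ C ∧ (V i).totalVariation univ ≤ C)
    (hUconv : ∀ ψ : (Fin m → ℝ) → ℝ, Continuous ψ →
      Tendsto (fun i => sInt (U i) ψ) atTop (𝓝 (sInt Ulim ψ)))
    (hVconv : ∀ ψ : (Fin n → ℝ) → ℝ, Continuous ψ →
      Tendsto (fun i => sInt (V i) ψ) atTop (𝓝 (sInt Vlim ψ))) :
    tildeI X Y s hbar f g Ulim Vlim ≤
      liminf (fun i => tildeI X Y s hbar f g (U i) (V i)) atTop := by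
  classical
  have hXYc : IsCompact (X ×ˢ Y) := hX.prod hY
  have hXm : MeasurableSet X := hX.isClosed.measurableSet
  have hYm : MeasurableSet Y := hY.isClosed.measurableSet
  have hXYm : MeasurableSet (X ×ˢ Y) := hXYc.isClosed.measurableSet
  -- continuous extensions
  obtain ⟨F, hFc, hFeq⟩ := exists_ext hX.isClosed hf_cont
  obtain ⟨G, hGc, hGeq⟩ := exists_ext hY.isClosed hg_cont
  obtain ⟨H₀, hH₀c, hH₀eq⟩ := exists_ext hXYc.isClosed hbar_cont
  obtain ⟨M₀, hM₀⟩ := hXYc.exists_bound_of_continuousOn hbar_cont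
  set M : ℝ := max M₀ 0 with hMdef
  set H : (Fin m → ℝ) × (Fin n → ℝ) → ℝ := fun p => max 0 (min (H₀ p) M) with hHdef
  have hHc : Continuous H := continuous_const.max (hH₀c.min continuous_const)
  have hH0 : ∀ p, 0 ≤ H p := fun p => le_max_left _ _
  have hHM : ∀ p, H p ≤ M := fun p => max_le (le_max_right M₀ 0) (min_le_right _ _)
  have hHeq : ∀ p ∈ X ×ˢ Y, H p = hbar p := by
    intro p hp
    have h0 : 0 ≤ hbar p := hbar_nonneg p hp
    have hub : hbar p ≤ M :=
      le_trans (le_trans (le_abs_self _) (by simpa [Real.norm_eq_abs] using hM₀ p hp))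
        (le_max_left _ _)
    rw [hHdef]
    simp only
    rw [hH₀eq p hp, min_eq_left hub, max_eq_right h0]
  -- supports
  have hμXc : (volume : Measure (Fin m → ℝ)).restrict X Xᶜ = 0 := by
    rw [Measure.restrict_apply hXm.compl, compl_inter_self, measure_empty]
  have hμYc : (volume : Measure (Fin n → ℝ)).restrict Y Yᶜ = 0 := by
    rw [Measure.restrict_apply hYm.compl, compl_inter_self, measure_empty]
  have hSTV : SignedMeasure.totalVariation ((volume.restrict (X ×ˢ Y)).withDensityᵥ s) ((X ×ˢ Y)ᶜ) = 0 := by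
    have hac := Measure.withDensityᵥ_absolutelyContinuous (volume.restrict (X ×ˢ Y)) s
    rw [SignedMeasure.absolutelyContinuous_ennreal_iff,
      VectorMeasure.ennrealToMeasure_toENNRealVectorMeasure] at hac
    refine hac ?_
    rw [Measure.restrict_apply hXYm.compl, compl_inter_self, measure_empty]
  obtain ⟨hSpos, hSneg⟩ := tv_split _ _ hSTV
  -- the signed measure `T U V`
  set TT : SignedMeasure (Fin m → ℝ) → SignedMeasure (Fin n → ℝ) →
      SignedMeasure ((Fin m → ℝ) × (Fin n → ℝ)) := fun W Z =>
    (volume.restrict (X ×ˢ Y)).withDensityᵥ s + smProdRight W (volume.restrict Y) +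
      smProdLeft (volume.restrict X) Z with hTTdef
  have htdef : ∀ W Z, tildeI X Y s hbar f g W Z =
      (∫ p, hbar p ∂(TT W Z).toJordanDecomposition.posPart) - sInt W f - sInt Z g :=
    fun W Z => rfl
  -- support of Jordan parts of `TT W Z`
  have hTnull : ∀ (W : SignedMeasure (Fin m → ℝ)) (Z : SignedMeasure (Fin n → ℝ)),
      W.totalVariation Xᶜ = 0 → Z.totalVariation Yᶜ = 0 →
      (TT W Z).toJordanDecomposition.posPart ((X ×ˢ Y)ᶜ) = 0 ∧
        (TT W Z).toJordanDecomposition.negPart ((X ×ˢ Y)ᶜ) = 0 := by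
    intro W Z hW hZ
    obtain ⟨hWpos, hWneg⟩ := tv_split _ _ hW
    obtain ⟨hZpos, hZneg⟩ := tv_split _ _ hZ
    obtain ⟨hPle, hNle⟩ := jordan_le_of_eq_sub
      (T_eq ((volume.restrict (X ×ˢ Y)).withDensityᵥ s) (volume.restrict X)
        (volume.restrict Y) W Z)
    constructor
    · refine le_antisymm ?_ (zero_le ..)
      calc (TT W Z).toJordanDecomposition.posPart ((X ×ˢ Y)ᶜ)
          ≤ prodP ((volume.restrict (X ×ˢ Y)).withDensityᵥ s) (volume.restrict X)
              (volume.restrict Y) W Z ((X ×ˢ Y)ᶜ) := Measure.le_iff.1 hPle _ hXYm.compl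
        _ = 0 := prodP_compl_null _ _ _ _ _ hSpos hμXc hμYc hWpos hZpos
    · refine le_antisymm ?_ (zero_le ..)
      calc (TT W Z).toJordanDecomposition.negPart ((X ×ˢ Y)ᶜ)
          ≤ prodN ((volume.restrict (X ×ˢ Y)).withDensityᵥ s) (volume.restrict X)
              (volume.restrict Y) W Z ((X ×ˢ Y)ᶜ) := Measure.le_iff.1 hNle _ hXYm.compl
        _ = 0 := prodN_compl_null _ _ _ _ _ hSneg hμXc hμYc hWneg hZneg
  -- reduce to ε-approximation
  refine le_of_forall_pos_le_add ?_
  intro ε hε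
  -- Jordan parts of the limit measure
  obtain ⟨hTlpos, hTlneg⟩ := hTnull Ulim Vlim hUlimsupp hVlimsupp
  -- test function φ from inner regularity
  obtain ⟨φ, hφc, hφ0, hφH, hkey⟩ := exists_test (TT Ulim Vlim) hXYc hTlpos hTlneg
    hHc hH0 hHM hε
  have hφM : ∀ p, |φ p| ≤ M := fun p => by
    rw [abs_of_nonneg (hφ0 p)]; exact (hφH p).trans (hHM p)
  -- the two marginal test functions
  set ψ₁ : (Fin m → ℝ) → ℝ := fun x => ∫ y, φ (x, y) ∂(volume.restrict Y) with hψ₁def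
  set ψ₂ : (Fin n → ℝ) → ℝ := fun y => ∫ x, φ (x, y) ∂(volume.restrict X) with hψ₂def
  have hψ₁c : Continuous ψ₁ := by
    refine continuous_of_dominated (bound := fun _ => M)
      (fun x => (hφc.comp (Continuous.prodMk_right x)).aestronglyMeasurable)
      (fun x => Filter.Eventually.of_forall fun y => by
        simpa [Real.norm_eq_abs] using hφM (x, y))
      (integrable_const M)
      (Filter.Eventually.of_forall fun y =>
        hφc.comp (continuous_id.prodMk continuous_const))
  have hψ₂c : Continuous ψ₂ := by
    refine continuous_of_dominated (bound := fun _ => M)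
      (fun y => (hφc.comp (continuous_id.prodMk continuous_const)).aestronglyMeasurable)
      (fun y => Filter.Eventually.of_forall fun x => by
        simpa [Real.norm_eq_abs] using hφM (x, y))
      (integrable_const M)
      (Filter.Eventually.of_forall fun x =>
        hφc.comp (Continuous.prodMk_right x))
  -- decomposition of `sInt (TT W Z) φ`
  have hdec : ∀ W Z, sInt (TT W Z) φ =
      sInt ((volume.restrict (X ×ˢ Y)).withDensityᵥ s) φ + sInt W ψ₁ + sInt Z ψ₂ :=
    fun W Z => sInt_T _ _ _ _ _ hφc.measurable hφM
  -- the comparison sequence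
  set a : ℕ → ℝ := fun i =>
    sInt ((volume.restrict (X ×ˢ Y)).withDensityᵥ s) φ + sInt (U i) ψ₁ + sInt (V i) ψ₂
      - sInt (U i) F - sInt (V i) G with hadef
  set L0 : ℝ :=
    sInt ((volume.restrict (X ×ˢ Y)).withDensityᵥ s) φ + sInt Ulim ψ₁ + sInt Vlim ψ₂
      - sInt Ulim F - sInt Vlim G with hL0def
  have ha : Tendsto a atTop (𝓝 L0) := by
    rw [hadef, hL0def]
    exact ((((tendsto_const_nhds.add (hUconv ψ₁ hψ₁c)).add (hVconv ψ₂ hψ₂c)).sub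
      (hUconv F hFc)).sub (hVconv G hGc))
  -- pointwise comparison with `tildeI`
  have hab : ∀ i, a i ≤ tildeI X Y s hbar f g (U i) (V i) := by
    intro i
    obtain ⟨hUip, hUin⟩ := tv_split _ _ (hUsupp i)
    obtain ⟨hVip, hVin⟩ := tv_split _ _ (hVsupp i)
    obtain ⟨hTip, hTin⟩ := hTnull (U i) (V i) (hUsupp i) (hVsupp i)
    have hfF : sInt (U i) f = sInt (U i) F := sInt_congr hUip hUin (fun x hx => (hFeq x hx).symm)
    have hgG : sInt (V i) g = sInt (V i) G := sInt_congr hVip hVin (fun x hx => (hGeq x hx).symm)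
    have hHint : Integrable H ((TT (U i) (V i)).toJordanDecomposition.posPart) :=
      integrable_of_bdd hHc.measurable (fun p => by
        rw [abs_of_nonneg (hH0 p)]; exact hHM p)
    have hφint : Integrable φ ((TT (U i) (V i)).toJordanDecomposition.posPart) :=
      integrable_of_bdd hφc.measurable hφM
    have hTi : sInt (TT (U i) (V i)) φ ≤
        ∫ p, hbar p ∂(TT (U i) (V i)).toJordanDecomposition.posPart := by
      have h1 : sInt (TT (U i) (V i)) φ ≤
          ∫ p, φ p ∂(TT (U i) (V i)).toJordanDecomposition.posPart := by
        have hnn : 0 ≤ ∫ p, φ p ∂(TT (U i) (V i)).toJordanDecomposition.negPart :=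
          integral_nonneg hφ0
        have : sInt (TT (U i) (V i)) φ =
            (∫ p, φ p ∂(TT (U i) (V i)).toJordanDecomposition.posPart) -
              ∫ p, φ p ∂(TT (U i) (V i)).toJordanDecomposition.negPart := rfl
        rw [this]
        linarith
      have h2 : (∫ p, φ p ∂(TT (U i) (V i)).toJordanDecomposition.posPart) ≤
          ∫ p, H p ∂(TT (U i) (V i)).toJordanDecomposition.posPart :=
        integral_mono hφint hHint hφH
      have h3 : (∫ p, H p ∂(TT (U i) (V i)).toJordanDecomposition.posPart) =
          ∫ p, hbar p ∂(TT (U i) (V i)).toJordanDecomposition.posPart :=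
        integral_congr_null hTip hHeq
      linarith
    rw [htdef (U i) (V i), hadef]
    simp only
    rw [← hdec (U i) (V i), hfF, hgG]
    linarith
  -- conclusion via liminf
  have hliminf_a : liminf a atTop = L0 := ha.liminf_eq
  -- uniform total-variation bounds via Banach–Steinhaus
  have hbdd_of_tendsto : ∀ {u : ℕ → ℝ} {c : ℝ}, Tendsto u atTop (𝓝 c) →
      ∃ C, ∀ i, |u i| ≤ C := by
    intro u c hu
    obtain ⟨C, hC⟩ := isBounded_iff_forall_norm_le.1 (Metric.isBounded_range_of_tendsto u hu)
    exact ⟨C, fun i => by simpa [Real.norm_eq_abs] using hC _ (mem_range_self i)⟩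
  obtain ⟨RU, hRU⟩ := tv_bound U hX hUsupp (fun ψ hψ => hbdd_of_tendsto (hUconv ψ hψ))
  obtain ⟨RV, hRV⟩ := tv_bound V hY hVsupp (fun ψ hψ => hbdd_of_tendsto (hVconv ψ hψ))
  obtain ⟨CF, hCF⟩ := hbdd_of_tendsto (hUconv F hFc)
  obtain ⟨CG, hCG⟩ := hbdd_of_tendsto (hVconv G hGc)
  -- an explicit upper bound for the sequence `tildeI`
  have hM0 : 0 ≤ M := le_max_right _ _
  set K0 : ℝ := (((SignedMeasure.toJordanDecomposition ((volume.restrict (X ×ˢ Y)).withDensityᵥ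
      s)).posPart univ).toReal
      + RU * ((volume : Measure (Fin n → ℝ)).restrict Y univ).toReal
      + ((volume : Measure (Fin m → ℝ)).restrict X univ).toReal * RV) with hK0def
  have hupper : ∀ i, tildeI X Y s hbar f g (U i) (V i) ≤ M * K0 + CF + CG := by
    intro i
    obtain ⟨hUip, hUin⟩ := tv_split _ _ (hUsupp i)
    obtain ⟨hVip, hVin⟩ := tv_split _ _ (hVsupp i)
    obtain ⟨hTip, hTin⟩ := hTnull (U i) (V i) (hUsupp i) (hVsupp i)
    have hfF : sInt (U i) f = sInt (U i) F := sInt_congr hUip hUin (fun x hx => (hFeq x hx).symm)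
    have hgG : sInt (V i) g = sInt (V i) G := sInt_congr hVip hVin (fun x hx => (hGeq x hx).symm)
    have hHint : Integrable H ((TT (U i) (V i)).toJordanDecomposition.posPart) :=
      integrable_of_bdd hHc.measurable (fun p => by
        rw [abs_of_nonneg (hH0 p)]; exact hHM p)
    have hhbar : (∫ p, hbar p ∂(TT (U i) (V i)).toJordanDecomposition.posPart) =
        ∫ p, H p ∂(TT (U i) (V i)).toJordanDecomposition.posPart :=
      (integral_congr_null hTip hHeq).symm
    -- bound the mass of the positive part
    have hPle := (jordan_le_of_eq_sub
      (T_eq ((volume.restrict (X ×ˢ Y)).withDensityᵥ s) (volume.restrict X)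
        (volume.restrict Y) (U i) (V i))).1
    have hmass : ((TT (U i) (V i)).toJordanDecomposition.posPart univ).toReal ≤ K0 := by
      have h1 : (TT (U i) (V i)).toJordanDecomposition.posPart univ ≤
          prodP ((volume.restrict (X ×ˢ Y)).withDensityᵥ s) (volume.restrict X)
            (volume.restrict Y) (U i) (V i) univ :=
        Measure.le_iff.1 hPle _ MeasurableSet.univ
      have h2 : ((TT (U i) (V i)).toJordanDecomposition.posPart univ).toReal ≤
          (prodP ((volume.restrict (X ×ˢ Y)).withDensityᵥ s) (volume.restrict X)
            (volume.restrict Y) (U i) (V i) univ).toReal :=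
        ENNReal.toReal_mono (measure_ne_top _ _) h1
      refine h2.trans ?_
      have hsplit : (prodP ((volume.restrict (X ×ˢ Y)).withDensityᵥ s) (volume.restrict X)
            (volume.restrict Y) (U i) (V i) univ).toReal =
          ((SignedMeasure.toJordanDecomposition ((volume.restrict (X ×ˢ Y)).withDensityᵥ
              s)).posPart univ).toReal
            + ((U i).toJordanDecomposition.posPart univ).toReal *
                ((volume : Measure (Fin n → ℝ)).restrict Y univ).toReal
            + ((volume : Measure (Fin m → ℝ)).restrict X univ).toReal *
                ((V i).toJordanDecomposition.posPart univ).toReal := by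
        unfold prodP
        rw [Measure.add_apply, Measure.add_apply,
          ENNReal.toReal_add (by finiteness) (by finiteness),
          ENNReal.toReal_add (by finiteness) (by finiteness),
          ← univ_prod_univ, Measure.prod_prod, Measure.prod_prod,
          ENNReal.toReal_mul, ENNReal.toReal_mul]
      rw [hsplit, hK0def]
      have htvU : (((U i).totalVariation) univ) ≠ ⊤ := by
        rw [SignedMeasure.totalVariation, Measure.add_apply]
        exact ENNReal.add_ne_top.2 ⟨measure_ne_top _ _, measure_ne_top _ _⟩
      have htvV : (((V i).totalVariation) univ) ≠ ⊤ := by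
        rw [SignedMeasure.totalVariation, Measure.add_apply]
        exact ENNReal.add_ne_top.2 ⟨measure_ne_top _ _, measure_ne_top _ _⟩
      have hU1 : ((U i).toJordanDecomposition.posPart univ).toReal ≤ RU := by
        refine le_trans (ENNReal.toReal_mono htvU ?_) (hRU i)
        rw [SignedMeasure.totalVariation, Measure.add_apply]
        exact le_self_add
      have hV1 : ((V i).toJordanDecomposition.posPart univ).toReal ≤ RV := by
        refine le_trans (ENNReal.toReal_mono htvV ?_) (hRV i)
        rw [SignedMeasure.totalVariation, Measure.add_apply]
        exact le_self_add
      have hmY : 0 ≤ ((volume : Measure (Fin n → ℝ)).restrict Y univ).toReal :=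
        ENNReal.toReal_nonneg
      have hmX : 0 ≤ ((volume : Measure (Fin m → ℝ)).restrict X univ).toReal :=
        ENNReal.toReal_nonneg
      have := mul_le_mul_of_nonneg_right hU1 hmY
      have := mul_le_mul_of_nonneg_left hV1 hmX
      linarith
    have hJ : (∫ p, H p ∂(TT (U i) (V i)).toJordanDecomposition.posPart) ≤ M * K0 := by
      calc ∫ p, H p ∂(TT (U i) (V i)).toJordanDecomposition.posPart
          ≤ ∫ _, M ∂(TT (U i) (V i)).toJordanDecomposition.posPart :=
            integral_mono hHint (integrable_const M) hHM
        _ = ((TT (U i) (V i)).toJordanDecomposition.posPart univ).toReal * M := by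
            rw [integral_const, smul_eq_mul, measureReal_def]
        _ ≤ K0 * M := mul_le_mul_of_nonneg_right hmass hM0
        _ = M * K0 := mul_comm _ _
    have hCFi := abs_le.1 (hCF i)
    have hCGi := abs_le.1 (hCG i)
    rw [htdef (U i) (V i), hhbar, hfF, hgG]
    linarith [hJ, hCFi.1, hCGi.1]
  have hcoV : IsCoboundedUnder (· ≥ ·) atTop
      (fun i => tildeI X Y s hbar f g (U i) (V i)) := by
    refine IsBoundedUnder.isCoboundedUnder_ge ?_
    exact isBoundedUnder_of ⟨M * K0 + CF + CG, fun i => hupper i⟩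
  have hlim_le : L0 ≤ liminf (fun i => tildeI X Y s hbar f g (U i) (V i)) atTop := by
    rw [← hliminf_a]
    exact liminf_le_liminf (Filter.Eventually.of_forall hab) ha.isBoundedUnder_ge hcoV
  -- rewrite the limit functional
  obtain ⟨hUlp, hUln⟩ := tv_split _ _ hUlimsupp
  obtain ⟨hVlp, hVln⟩ := tv_split _ _ hVlimsupp
  have hfFl : sInt Ulim f = sInt Ulim F := sInt_congr hUlp hUln (fun x hx => (hFeq x hx).symm)
  have hgGl : sInt Vlim g = sInt Vlim G := sInt_congr hVlp hVln (fun x hx => (hGeq x hx).symm)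
  have hHl : (∫ p, hbar p ∂(TT Ulim Vlim).toJordanDecomposition.posPart) =
      ∫ p, H p ∂(TT Ulim Vlim).toJordanDecomposition.posPart :=
    (integral_congr_null hTlpos hHeq).symm
  rw [htdef Ulim Vlim, hfFl, hgGl, hHl]
  have := hkey
  rw [hdec Ulim Vlim] at this
  rw [hL0def] at hlim_le
  linarith
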